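/- For λ > 0, if P_n^{(λ)}(x;π/2) and P_{n+1}^{(λ+1)}(x;π/2) have no common zeros, then the n zeros of P_n^{(λ)}(x;π/2) are real and simple and strictly interlace with the n+1 zeros of P_{n+1}^{(λ+1)}(x;π/2): exactly one zero of P_n^{(λ)} lies between any two consecutive zeros of P_{n+1}^{(λ+1)}. -/

import Mathlib

open Finset

/-- Pochhammer symbol `(a)ₙ` for a complex number `a`. -/
noncomputable def poch (a : ℂ) (n : ℕ) : ℂ := ∏ k ∈ Finset.range n, (a + k)

/-- Monic Meixner–Pollaczek polynomial `P_n^{(λ)}(x;φ)`, as a function of a complex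
variable `x`, defined via the terminating Gauss hypergeometric sum. -/
noncomputable def MP (n : ℕ) (lam φ : ℝ) (x : ℂ) : ℂ :=
  Complex.I ^ n * poch (2 * (lam : ℂ)) n *
    (Complex.exp (2 * Complex.I * φ) / (Complex.exp (2 * Complex.I * φ) - 1)) ^ n *
    ∑ k ∈ Finset.range (n + 1),
      poch (-(n : ℂ)) k * poch ((lam : ℂ) + Complex.I * x) k /
          (poch (2 * (lam : ℂ)) k * (Nat.factorial k : ℂ)) *
        (1 - Complex.exp (-(2 * Complex.I * φ))) ^ k

@[simp] lemma poch_zero (a : ℂ) : poch a 0 = 1 := by simp [poch]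

lemma poch_succ (a : ℂ) (n : ℕ) : poch a (n + 1) = poch a n * (a + n) := by
  simp [poch, Finset.prod_range_succ]

lemma poch_succ_left (a : ℂ) (n : ℕ) : poch a (n + 1) = a * poch (a + 1) n := by
  rw [poch, Finset.prod_range_succ']
  rw [poch]
  have : ∀ k ∈ Finset.range n, (a + ((k:ℕ) + 1 : ℕ)) = (a + 1 + k) := by
    intro k _; push_cast; ring
  rw [Finset.prod_congr rfl this]
  simp [mul_comm]

lemma poch_pos_ne_zero {c : ℝ} (hc : 0 < c) (k : ℕ) : poch (c : ℂ) k ≠ 0 := by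
  rw [poch]
  refine Finset.prod_ne_zero_iff.2 fun i _ => ?_
  have : (0:ℝ) < c + i := by positivity
  intro h
  have := congrArg Complex.re h
  push_cast at this
  simp at this
  linarith

lemma poch_neg_nat_eq_zero {m k : ℕ} (h : m < k) : poch (-(m : ℂ)) k = 0 := by
  rw [poch]
  refine Finset.prod_eq_zero (Finset.mem_range.2 h) ?_
  simp

/-- The hypergeometric-type sum specialized at `φ = π/2`. -/
noncomputable def Sfun (n : ℕ) (lam : ℝ) (t : ℂ) : ℂ :=
  ∑ k ∈ Finset.range (n + 1),
    poch (-(n : ℂ)) k * poch t k / (poch (2 * (lam : ℂ)) k * (Nat.factorial k : ℂ)) * 2 ^ k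

lemma exp_two_I_pi_div_two : Complex.exp (2 * Complex.I * ((Real.pi / 2 : ℝ) : ℂ)) = -1 := by
  have : 2 * Complex.I * ((Real.pi / 2 : ℝ) : ℂ) = (Real.pi : ℂ) * Complex.I := by
    push_cast; ring
  rw [this, Complex.exp_pi_mul_I]

lemma MP_pi2 (n : ℕ) (lam : ℝ) (x : ℂ) :
    MP n lam (Real.pi / 2) x =
      Complex.I ^ n * poch (2 * (lam : ℂ)) n * (2 : ℂ)⁻¹ ^ n *
        Sfun n lam ((lam : ℂ) + Complex.I * x) := by
  rw [MP, Sfun, exp_two_I_pi_div_two]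
  have h2 : (1 : ℂ) - Complex.exp (-(2 * Complex.I * ((Real.pi / 2 : ℝ) : ℂ))) = 2 := by
    rw [Complex.exp_neg, exp_two_I_pi_div_two]
    norm_num
  rw [h2]
  norm_num

noncomputable def acoef (lam : ℝ) (m k : ℕ) : ℂ :=
  poch (-(m : ℂ)) k / (poch (2 * (lam : ℂ)) k * (Nat.factorial k : ℂ)) * 2 ^ k

lemma acoef_zero (lam : ℝ) (m : ℕ) : acoef lam m 0 = 1 := by simp [acoef]

lemma acoef_eq_zero {m k : ℕ} (lam : ℝ) (h : m < k) : acoef lam m k = 0 := by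
  simp [acoef, poch_neg_nat_eq_zero h]

lemma Sfun_eq_sum (m : ℕ) (lam : ℝ) (t : ℂ) {N : ℕ} (h : m + 1 ≤ N) :
    Sfun m lam t = ∑ k ∈ Finset.range N, acoef lam m k * poch t k := by
  rw [Sfun]
  rw [show (∑ k ∈ Finset.range (m+1),
      poch (-(m : ℂ)) k * poch t k / (poch (2 * (lam : ℂ)) k * (Nat.factorial k : ℂ)) * 2 ^ k)
      = ∑ k ∈ Finset.range (m+1), acoef lam m k * poch t k from
    Finset.sum_congr rfl fun k _ => by rw [acoef]; ring]
  exact Finset.sum_subset (Finset.range_subset_range.2 h) fun k _ hk =>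
    by rw [acoef_eq_zero lam (by simpa using hk), zero_mul]

lemma pochID (lam : ℂ) (m k : ℕ) :
    (2 * lam + ((m:ℂ)+1)) * poch (-((m:ℂ)+2)) (k+1)
      - (2 * lam + 2*((k:ℂ)+1)) * poch (-((m:ℂ)+1)) (k+1)
      - ((m:ℂ)+1) * poch (-(m:ℂ)) (k+1)
      + (2*lam + (k:ℂ)) * ((k:ℂ)+1) * poch (-((m:ℂ)+1)) k = 0 := by
  have h1 : poch (-((m:ℂ)+2)) (k+1) = (-((m:ℂ)+2)) * poch (-((m:ℂ)+1)) k := by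
    rw [poch_succ_left]; congr 2; ring
  have h2 : poch (-((m:ℂ)+1)) (k+1) = poch (-((m:ℂ)+1)) k * (-((m:ℂ)+1) + k) := poch_succ _ k
  have h4 : poch (-((m:ℂ)+1)) (k+1) = (-((m:ℂ)+1)) * poch (-(m:ℂ)) k := by
    rw [poch_succ_left]; congr 2; ring
  have h3' : poch (-(m:ℂ)) (k+1) = poch (-(m:ℂ)) k * (-(m:ℂ) + k) := poch_succ _ k
  have huv : poch (-((m:ℂ)+1)) k * (-((m:ℂ)+1) + k) = (-((m:ℂ)+1)) * poch (-(m:ℂ)) k := by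
    rw [← h2, h4]
  rw [h1, h2, h3']
  linear_combination (-((k:ℂ)-(m:ℂ))) * huv

lemma key_coef (lam : ℝ) (hlam : 0 < lam) (m k : ℕ) :
    (2 * (lam:ℂ) + ((m:ℂ)+1)) * acoef lam (m+2) (k+1)
      - (2 * (lam:ℂ) + 2*((k:ℂ)+1)) * acoef lam (m+1) (k+1)
      - ((m:ℂ)+1) * acoef lam m (k+1)
      + 2 * acoef lam (m+1) k = 0 := by
  have h2l : (0:ℝ) < 2 * lam := by linarith
  have hpk : poch (2 * (lam:ℂ)) k ≠ 0 := by
    have := poch_pos_ne_zero h2l k; push_cast at this; exact this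
  have hq : (2*(lam:ℂ) + k) ≠ 0 := by
    have : (2*(lam:ℂ) + k) = ((2*lam + k : ℝ) : ℂ) := by push_cast; ring
    rw [this, Complex.ofReal_ne_zero]
    positivity
  have hfk : ((Nat.factorial k : ℕ) : ℂ) ≠ 0 := Nat.cast_ne_zero.2 (Nat.factorial_ne_zero k)
  have hk1 : ((k:ℂ)+1) ≠ 0 := by
    have : ((k:ℂ) + 1) = ((k + 1 : ℝ) : ℂ) := by push_cast; ring
    rw [this, Complex.ofReal_ne_zero]
    positivity
  have hps : poch (2 * (lam:ℂ)) (k+1) = poch (2 * (lam:ℂ)) k * (2*(lam:ℂ)+k) := poch_succ _ k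
  have e2 : acoef lam (m+2) (k+1)
      = poch (-((m:ℂ)+2)) (k+1) * 2^(k+1)
        / (poch (2*(lam:ℂ)) k * (2*(lam:ℂ)+k) * ((k:ℂ)+1) * (Nat.factorial k : ℂ)) := by
    rw [acoef, hps, Nat.factorial_succ]; push_cast; ring
  have e1 : acoef lam (m+1) (k+1)
      = poch (-((m:ℂ)+1)) (k+1) * 2^(k+1)
        / (poch (2*(lam:ℂ)) k * (2*(lam:ℂ)+k) * ((k:ℂ)+1) * (Nat.factorial k : ℂ)) := by
    rw [acoef, hps, Nat.factorial_succ]; push_cast; ring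
  have e0 : acoef lam m (k+1)
      = poch (-((m:ℂ))) (k+1) * 2^(k+1)
        / (poch (2*(lam:ℂ)) k * (2*(lam:ℂ)+k) * ((k:ℂ)+1) * (Nat.factorial k : ℂ)) := by
    rw [acoef, hps, Nat.factorial_succ]; push_cast; ring
  have eb : acoef lam (m+1) k
      = (2*(lam:ℂ)+k) * ((k:ℂ)+1) * poch (-((m:ℂ)+1)) k * 2^k
        / (poch (2*(lam:ℂ)) k * (2*(lam:ℂ)+k) * ((k:ℂ)+1) * (Nat.factorial k : ℂ)) := by
    rw [acoef]; push_cast; field_simp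
  rw [e2, e1, e0, eb]
  rw [mul_div_assoc', mul_div_assoc', mul_div_assoc', mul_div_assoc']
  rw [div_sub_div_same, div_sub_div_same, ← add_div]
  rw [div_eq_zero_iff]
  left
  have hp := pochID (lam:ℂ) m k
  push_cast at hp ⊢
  linear_combination (2:ℂ)^(k+1) * hp + (2*(lam:ℂ)+(k:ℂ)) * ((k:ℂ)+1) * poch (-((m:ℂ)+1)) k * ((2:ℂ)*2^k - 2^(k+1))
lemma SfunR1 (lam : ℝ) (hlam : 0 < lam) (m : ℕ) (t : ℂ) :
    (2*(lam:ℂ) + ((m:ℂ)+1)) * Sfun (m+2) lam t + (2*t - 2*(lam:ℂ)) * Sfun (m+1) lam t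
      - ((m:ℂ)+1) * Sfun m lam t = 0 := by
  rw [Sfun_eq_sum (m+2) lam t (le_refl (m+3)), Sfun_eq_sum (m+1) lam t (by omega : m+2 ≤ m+3),
    Sfun_eq_sum m lam t (by omega : m+1 ≤ m+3)]
  rw [Finset.mul_sum, Finset.mul_sum, Finset.mul_sum, ← Finset.sum_add_distrib,
    ← Finset.sum_sub_distrib]
  have hsplit : ∀ k : ℕ,
      (2*(lam:ℂ) + ((m:ℂ)+1)) * (acoef lam (m+2) k * poch t k)
        + (2*t - 2*(lam:ℂ)) * (acoef lam (m+1) k * poch t k)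
        - ((m:ℂ)+1) * (acoef lam m k * poch t k)
      = ((2*(lam:ℂ) + ((m:ℂ)+1)) * acoef lam (m+2) k - (2*(lam:ℂ) + 2*(k:ℂ)) * acoef lam (m+1) k
          - ((m:ℂ)+1) * acoef lam m k) * poch t k
        + 2 * acoef lam (m+1) k * poch t (k+1) := by
    intro k
    rw [poch_succ]
    ring
  rw [Finset.sum_congr rfl fun k _ => hsplit k]
  rw [Finset.sum_add_distrib]
  rw [Finset.sum_range_succ' (fun k => ((2*(lam:ℂ) + ((m:ℂ)+1)) * acoef lam (m+2) k
    - (2*(lam:ℂ) + 2*(k:ℂ)) * acoef lam (m+1) k - ((m:ℂ)+1) * acoef lam m k) * poch t k) (m+2)]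
  rw [Finset.sum_range_succ (fun k => 2 * acoef lam (m+1) k * poch t (k+1)) (m+2)]
  rw [acoef_eq_zero lam (by omega : m+1 < m+2)]
  have h0 : ((2*(lam:ℂ) + ((m:ℂ)+1)) * acoef lam (m+2) 0
      - (2*(lam:ℂ) + 2*((0:ℕ):ℂ)) * acoef lam (m+1) 0 - ((m:ℂ)+1) * acoef lam m 0) * poch t 0
      = 0 := by
    rw [acoef_zero, acoef_zero, acoef_zero, poch_zero]
    push_cast
    ring
  rw [h0]
  simp only [mul_zero, zero_mul, add_zero]
  rw [← Finset.sum_add_distrib]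
  have hterm : ∀ k ∈ Finset.range (m+2),
      ((2*(lam:ℂ) + ((m:ℂ)+1)) * acoef lam (m+2) (k+1)
        - (2*(lam:ℂ) + 2*(((k+1:ℕ)):ℂ)) * acoef lam (m+1) (k+1)
        - ((m:ℂ)+1) * acoef lam m (k+1)) * poch t (k+1)
      + 2 * acoef lam (m+1) k * poch t (k+1) = 0 := by
    intro k _
    have hk := key_coef lam hlam m k
    have : ((2*(lam:ℂ) + ((m:ℂ)+1)) * acoef lam (m+2) (k+1)
        - (2*(lam:ℂ) + 2*(((k+1:ℕ)):ℂ)) * acoef lam (m+1) (k+1)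
        - ((m:ℂ)+1) * acoef lam m (k+1)) + 2 * acoef lam (m+1) k = 0 := by
      push_cast
      push_cast at hk
      linear_combination hk
    linear_combination poch t (k+1) * this
  rw [Finset.sum_congr rfl hterm]
  simp

lemma MP_zero (lam : ℝ) (x : ℂ) : MP 0 lam (Real.pi / 2) x = 1 := by
  rw [MP_pi2]
  simp [Sfun]

lemma MP_one (lam : ℝ) (hlam : 0 < lam) (x : ℂ) : MP 1 lam (Real.pi / 2) x = x := by
  rw [MP_pi2]
  have hl : ((lam:ℂ)) ≠ 0 := by
    rw [Complex.ofReal_ne_zero]; positivity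
  rw [Sfun]
  rw [Finset.sum_range_succ, Finset.sum_range_succ, Finset.sum_range_zero]
  rw [poch_succ, poch_succ, poch_succ]
  simp [poch_zero]
  field_simp
  ring_nf
  simp [Complex.I_sq]

lemma rec_MP (lam : ℝ) (hlam : 0 < lam) (m : ℕ) (x : ℂ) :
    MP (m+2) lam (Real.pi / 2) x
      = x * MP (m+1) lam (Real.pi / 2) x
        - ((((m:ℂ))+1) * (((m:ℂ))+2*(lam:ℂ)) / 4) * MP m lam (Real.pi / 2) x := by
  rw [MP_pi2, MP_pi2, MP_pi2]
  have hR1 := SfunR1 lam hlam m ((lam:ℂ) + Complex.I * x)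
  have hp2 : poch (2*(lam:ℂ)) (m+2) = poch (2*(lam:ℂ)) m * (2*(lam:ℂ)+m) * (2*(lam:ℂ)+((m:ℂ)+1)) := by
    rw [poch_succ, poch_succ]; push_cast; ring
  have hp1 : poch (2*(lam:ℂ)) (m+1) = poch (2*(lam:ℂ)) m * (2*(lam:ℂ)+m) := poch_succ _ m
  rw [hp2, hp1]
  linear_combination (Complex.I^(m+2) * poch (2*(lam:ℂ)) m * ((2:ℂ)⁻¹)^(m+2) * (2*(lam:ℂ)+(m:ℂ))) * hR1
    + ((-(x * poch (2*(lam:ℂ)) m * (2*(lam:ℂ)+(m:ℂ)) * ((2:ℂ)⁻¹)^(m+1) * Complex.I^(m+1)))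
        * Sfun (m+1) lam ((lam:ℂ) + Complex.I * x)
      + (((m:ℂ)+1) * (2*(lam:ℂ)+(m:ℂ)) * poch (2*(lam:ℂ)) m * ((2:ℂ)⁻¹)^(m+2) * Complex.I^m)
        * Sfun m lam ((lam:ℂ) + Complex.I * x)) * Complex.I_sq
open Polynomial in
/-- The monic orthogonal polynomial family (symmetric Meixner–Pollaczek, `φ = π/2`). -/
noncomputable def pp (lam : ℝ) : ℕ → Polynomial ℝ
  | 0 => 1
  | 1 => Polynomial.X
  | (m+2) => Polynomial.X * pp lam (m+1) - Polynomial.C (((m:ℝ)+1)*((m:ℝ)+2*lam)/4) * pp lam m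

open Polynomial

lemma pp_monic_natDegree (lam : ℝ) : ∀ n : ℕ, (pp lam n).Monic ∧ (pp lam n).natDegree = n := by
  intro n
  induction n using Nat.twoStepInduction with
  | zero => exact ⟨monic_one, natDegree_one⟩
  | one => exact ⟨monic_X, natDegree_X⟩
  | more m ih1 ih2 =>
    have hmon : (Polynomial.X * pp lam (m+1)).Monic := monic_X.mul ih2.1
    have hdeg : (Polynomial.X * pp lam (m+1)).natDegree = m + 2 := by
      rw [natDegree_X_mul ih2.1.ne_zero, ih2.2]
    have hlt : (Polynomial.C (((m:ℝ)+1)*((m:ℝ)+2*lam)/4) * pp lam m).natDegree < m + 2 := by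
      calc (Polynomial.C (((m:ℝ)+1)*((m:ℝ)+2*lam)/4) * pp lam m).natDegree
          ≤ (Polynomial.C (((m:ℝ)+1)*((m:ℝ)+2*lam)/4)).natDegree + (pp lam m).natDegree :=
            natDegree_mul_le
        _ ≤ 0 + m := by rw [natDegree_C, ih1.2]
        _ < m + 2 := by omega
    constructor
    · show (Polynomial.X * pp lam (m+1) - _).Monic
      have := hmon.sub_of_left (p := Polynomial.X * pp lam (m+1))
        (q := Polynomial.C (((m:ℝ)+1)*((m:ℝ)+2*lam)/4) * pp lam m) ?_
      · exact this
      · rw [Polynomial.degree_eq_natDegree hmon.ne_zero, hdeg]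
        exact lt_of_le_of_lt (degree_le_natDegree) (by exact_mod_cast hlt)
    · show (Polynomial.X * pp lam (m+1) - _).natDegree = m + 2
      rw [natDegree_sub_eq_left_of_natDegree_lt (by rw [hdeg]; exact hlt), hdeg]

lemma aeval_pp (lam : ℝ) (hlam : 0 < lam) (n : ℕ) (x : ℂ) :
    MP n lam (Real.pi / 2) x = Polynomial.aeval x (pp lam n) := by
  induction n using Nat.twoStepInduction with
  | zero => rw [MP_zero]; simp [pp]
  | one => rw [MP_one lam hlam]; simp [pp]
  | more m ih1 ih2 =>
    rw [rec_MP lam hlam m x, ih1, ih2]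
    show _ = Polynomial.aeval x (Polynomial.X * pp lam (m+1)
      - Polynomial.C (((m:ℝ)+1)*((m:ℝ)+2*lam)/4) * pp lam m)
    rw [map_sub, map_mul, map_mul, Polynomial.aeval_X, Polynomial.aeval_C]
    rw [show (algebraMap ℝ ℂ) (((m:ℝ)+1)*((m:ℝ)+2*lam)/4) = (((m:ℂ))+1)*(((m:ℂ))+2*(lam:ℂ))/4 from by
      rw [Complex.coe_algebraMap]; push_cast; ring]
lemma mixed_MP (lam : ℝ) (hlam : 0 < lam) (n : ℕ) (x : ℂ) :
    (2*(lam:ℂ)+(n:ℂ)) * (2*(lam:ℂ)+(n:ℂ)+1) * MP n lam (Real.pi/2) x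
      = 2*(2*(lam:ℂ)^2+((n:ℂ)+1)*(lam:ℂ)+2*x^2) * MP n (lam+1) (Real.pi/2) x
        - 4*x*MP (n+1) (lam+1) (Real.pi/2) x := by
  have hlam1 : 0 < lam + 1 := by linarith
  induction n using Nat.twoStepInduction with
  | zero =>
    rw [MP_zero, MP_zero, MP_one (lam+1) hlam1]
    push_cast
    ring
  | one =>
    rw [MP_one lam hlam, MP_one (lam+1) hlam1, rec_MP (lam+1) hlam1 0 x, MP_one (lam+1) hlam1,
      MP_zero]
    push_cast
    ring
  | more m ih1 ih2 =>
    have e1 := rec_MP lam hlam m x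
    have e2 := rec_MP (lam+1) hlam1 (m+1) x
    have e3 := rec_MP (lam+1) hlam1 m x
    have hd0 : (2*(lam:ℂ)+(m:ℂ)) ≠ 0 := by
      rw [show (2*(lam:ℂ)+(m:ℂ)) = ((2*lam+(m:ℝ) : ℝ) : ℂ) from by push_cast; ring,
        Complex.ofReal_ne_zero]
      positivity
    have hd1 : (2*(lam:ℂ)+(m:ℂ)+1) ≠ 0 := by
      rw [show (2*(lam:ℂ)+(m:ℂ)+1) = ((2*lam+(m:ℝ)+1 : ℝ) : ℂ) from by push_cast; ring,
        Complex.ofReal_ne_zero]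
      positivity
    have hd2 : (2*(lam:ℂ)+(m:ℂ)+2) ≠ 0 := by
      rw [show (2*(lam:ℂ)+(m:ℂ)+2) = ((2*lam+(m:ℝ)+2 : ℝ) : ℂ) from by push_cast; ring,
        Complex.ofReal_ne_zero]
      positivity
    push_cast at ih1 ih2 e1 e2 e3 ⊢
    -- multiply goal by d_m * d_{m+1} = (2λ+m)(2λ+m+1) * (2λ+m+1)(2λ+m+2)
    have key : ((2*(lam:ℂ)+(m:ℂ))*(2*(lam:ℂ)+(m:ℂ)+1)) * (((2*(lam:ℂ)+(m:ℂ)+1)*(2*(lam:ℂ)+(m:ℂ)+2)) *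
        ((2*(lam:ℂ)+((m:ℂ)+2)) * (2*(lam:ℂ)+((m:ℂ)+2)+1) * MP (m+2) lam (Real.pi/2) x
          - (2*(2*(lam:ℂ)^2+(((m:ℂ)+2)+1)*(lam:ℂ)+2*x^2) * MP (m+2) (lam+1) (Real.pi/2) x
            - 4*x*MP (m+3) (lam+1) (Real.pi/2) x))) = 0 := by
      rw [e1, e2, e3]
      rw [e3] at ih2
      linear_combination
        (((2*(lam:ℂ)+(m:ℂ))*(2*(lam:ℂ)+(m:ℂ)+1)*(2*(lam:ℂ)+(m:ℂ)+2)*(2*(lam:ℂ)+(m:ℂ)+3)*x) * ih2)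
        - (((2*(lam:ℂ)+(m:ℂ)+1)*(2*(lam:ℂ)+(m:ℂ)+2)*(2*(lam:ℂ)+(m:ℂ)+2)*(2*(lam:ℂ)+(m:ℂ)+3)*(((m:ℂ)+1)*((m:ℂ)+2*(lam:ℂ))/4)) * ih1)
    have h1 := mul_eq_zero.mp key
    rcases h1 with h | h
    · exact absurd h (mul_ne_zero hd0 hd1)
    have h2 := mul_eq_zero.mp h
    rcases h2 with h | h
    · exact absurd h (mul_ne_zero hd1 hd2)
    push_cast at h
    linear_combination h
open Polynomial

lemma card_filter_lt_fin {n : ℕ} (i : ℕ) (hi : i ≤ n) :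
    (Finset.univ.filter fun j : Fin n => (j:ℕ) < i).card = i := by
  classical
  apply Finset.card_eq_of_bijective (fun k hk => (⟨k, lt_of_lt_of_le hk hi⟩ : Fin n))
  · intro j hj
    rw [Finset.mem_filter] at hj
    exact ⟨(j:ℕ), hj.2, by apply Fin.ext; simp⟩
  · intro k hk
    rw [Finset.mem_filter]
    exact ⟨Finset.mem_univ _, hk⟩
  · intro k l hk hl h
    simpa using congrArg Fin.val h

lemma sign_prod_aux {n : ℕ} (r : Fin n → ℝ) (x : ℝ) (i : ℕ) (hi : i ≤ n)
    (h1 : ∀ j : Fin n, (j:ℕ) < i → r j < x) (h2 : ∀ j : Fin n, i ≤ (j:ℕ) → x < r j) :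
    0 < (-1:ℝ)^(n-i) * ∏ j, (x - r j) := by
  classical
  have hsplit := Finset.prod_filter_mul_prod_filter_not Finset.univ
    (fun j : Fin n => (j:ℕ) < i) (fun j => x - r j)
  have hcard : (Finset.univ.filter fun j : Fin n => ¬ (j:ℕ) < i).card = n - i := by
    have h := Finset.card_filter_add_card_filter_not (s := (Finset.univ : Finset (Fin n)))
      (p := fun j : Fin n => (j:ℕ) < i)
    rw [card_filter_lt_fin i hi] at h
    have huniv : (Finset.univ : Finset (Fin n)).card = n := by simp
    rw [huniv] at h
    omega
  have hP1 : 0 < ∏ j ∈ Finset.univ.filter (fun j : Fin n => (j:ℕ) < i), (x - r j) := by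
    apply Finset.prod_pos
    intro j hj
    rw [Finset.mem_filter] at hj
    have := h1 j hj.2
    linarith
  have hneg : ∏ j ∈ Finset.univ.filter (fun j : Fin n => ¬ (j:ℕ) < i), (x - r j)
      = (-1:ℝ)^(n-i) * ∏ j ∈ Finset.univ.filter (fun j : Fin n => ¬ (j:ℕ) < i), (r j - x) := by
    rw [← hcard, ← Finset.prod_const (-1:ℝ), ← Finset.prod_mul_distrib]
    apply Finset.prod_congr rfl
    intro j _
    ring
  have hP2 : 0 < ∏ j ∈ Finset.univ.filter (fun j : Fin n => ¬ (j:ℕ) < i), (r j - x) := by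
    apply Finset.prod_pos
    intro j hj
    rw [Finset.mem_filter] at hj
    have := h2 j (by omega)
    linarith
  have hsq : (-1:ℝ)^(n-i) * (-1:ℝ)^(n-i) = 1 := by
    rw [← pow_add]
    exact Even.neg_one_pow ⟨n-i, by omega⟩
  have key : (-1:ℝ)^(n-i) * ∏ j, (x - r j)
      = (∏ j ∈ Finset.univ.filter (fun j : Fin n => (j:ℕ) < i), (x - r j))
        * ∏ j ∈ Finset.univ.filter (fun j : Fin n => ¬ (j:ℕ) < i), (r j - x) := by
    rw [← hsplit, hneg]
    linear_combination ((∏ j ∈ Finset.univ.filter (fun j : Fin n => (j:ℕ) < i), (x - r j))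
      * (∏ j ∈ Finset.univ.filter (fun j : Fin n => ¬ (j:ℕ) < i), (r j - x))) * hsq
  rw [key]
  exact mul_pos hP1 hP2

lemma poly_root_Ioo (p : Polynomial ℝ) {a b : ℝ} (hab : a < b)
    (hsign : p.eval a * p.eval b < 0) : ∃ c, a < c ∧ c < b ∧ p.eval c = 0 := by
  rcases mul_neg_iff.mp hsign with ⟨ha, hb⟩ | ⟨ha, hb⟩
  · have := intermediate_value_Ioo' hab.le p.continuousOn
    have h0 : (0:ℝ) ∈ Set.Ioo (p.eval b) (p.eval a) := ⟨hb, ha⟩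
    obtain ⟨c, hc, hc0⟩ := this h0
    exact ⟨c, hc.1, hc.2, hc0⟩
  · have := intermediate_value_Ioo hab.le p.continuousOn
    have h0 : (0:ℝ) ∈ Set.Ioo (p.eval a) (p.eval b) := ⟨ha, hb⟩
    obtain ⟨c, hc, hc0⟩ := this h0
    exact ⟨c, hc.1, hc.2, hc0⟩

lemma poly_root_gt (p : Polynomial ℝ) (hm : p.Monic) (hd : 0 < p.degree) {a : ℝ}
    (ha : p.eval a < 0) : ∃ c, a < c ∧ p.eval c = 0 := by
  have ht := p.tendsto_atTop_of_leadingCoeff_nonneg hd (by rw [hm.leadingCoeff]; norm_num)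
  obtain ⟨b, hb1, hb2⟩ := ((ht.eventually_gt_atTop 0).and (Filter.eventually_ge_atTop (a+1))).exists
  have hab : a < b := by linarith
  obtain ⟨c, hc1, _, hc0⟩ := poly_root_Ioo p hab (mul_neg_of_neg_of_pos ha hb1)
  exact ⟨c, hc1, hc0⟩

lemma poly_root_lt (p : Polynomial ℝ) (hm : p.Monic) (hd : 0 < p.degree) {a : ℝ}
    (ha : (-1:ℝ)^(p.natDegree) * p.eval a < 0) : ∃ c, c < a ∧ p.eval c = 0 := by
  classical
  set d := p.natDegree with hdd
  have hd1 : 1 ≤ d := by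
    rw [hdd]
    exact natDegree_pos_iff_degree_pos.mpr hd
  set q : Polynomial ℝ := Polynomial.C ((-1:ℝ)^d) * p.comp (-Polynomial.X) with hq
  have hXdeg : (-Polynomial.X : Polynomial ℝ).natDegree = 1 := by simp
  have hcompdeg : (p.comp (-Polynomial.X)).natDegree = d := by
    rw [natDegree_comp, hXdeg, mul_one]
  have hcomplead : (p.comp (-Polynomial.X)).leadingCoeff = (-1:ℝ)^d := by
    rw [leadingCoeff_comp (by rw [hXdeg]; omega)]
    rw [hm.leadingCoeff]
    simp [leadingCoeff_neg]
    rfl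
  have hqmonic : q.Monic := by
    rw [Monic, hq, leadingCoeff_mul, leadingCoeff_C, hcomplead]
    rw [← pow_add]
    exact Even.neg_one_pow ⟨d, by omega⟩
  have hqdeg : 0 < q.degree := by
    have hqnd : q.natDegree = d := by
      rw [hq, natDegree_C_mul (by positivity : ((-1:ℝ)^d) ≠ 0), hcompdeg]
    rw [degree_eq_natDegree hqmonic.ne_zero, hqnd]
    exact_mod_cast hd1
  have hqeval : ∀ t : ℝ, q.eval t = (-1:ℝ)^d * p.eval (-t) := by
    intro t
    rw [hq]
    simp [eval_comp]
  have hqa : q.eval (-a) < 0 := by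
    rw [hqeval, neg_neg]
    exact ha
  obtain ⟨c, hc1, hc0⟩ := poly_root_gt q hqmonic hqdeg hqa
  refine ⟨-c, by linarith, ?_⟩
  rw [hqeval] at hc0
  rcases mul_eq_zero.mp hc0 with h | h
  · exact absurd h (by positivity)
  · exact h
lemma monic_factor_roots {p : Polynomial ℝ} (hm : p.Monic) {n : ℕ} (hd : p.natDegree = n)
    (t : Fin n → ℝ) (ht : Function.Injective t) (h0 : ∀ i, p.eval (t i) = 0) :
    p = ∏ i, (Polynomial.X - Polynomial.C (t i)) := by
  classical
  have hp0 : p ≠ 0 := hm.ne_zero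
  set Mset : Multiset ℝ := Multiset.map t Finset.univ.val with hMset
  have hnodup : Mset.Nodup := Multiset.Nodup.map ht Finset.univ.nodup
  have hle : Mset ≤ p.roots := by
    rw [Multiset.le_iff_subset hnodup]
    intro a ha
    rw [hMset, Multiset.mem_map] at ha
    obtain ⟨i, _, rfl⟩ := ha
    rw [Polynomial.mem_roots hp0]
    exact h0 i
  have hdvd : (Multiset.map (fun a => Polynomial.X - Polynomial.C a) Mset).prod ∣ p :=
    dvd_trans (Multiset.prod_dvd_prod_of_le (Multiset.map_le_map hle))
      (Polynomial.prod_multiset_X_sub_C_dvd p)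
  have hqmonic : (Multiset.map (fun a => Polynomial.X - Polynomial.C a) Mset).prod.Monic :=
    Polynomial.monic_multiset_prod_of_monic _ _ fun a _ => Polynomial.monic_X_sub_C a
  have hqdeg : (Multiset.map (fun a => Polynomial.X - Polynomial.C a) Mset).prod.natDegree = n := by
    rw [Polynomial.natDegree_multiset_prod_X_sub_C_eq_card, hMset, Multiset.card_map]
    simp
  have := Polynomial.eq_of_monic_of_dvd_of_natDegree_le hqmonic hm hdvd (by rw [hqdeg, hd])
  rw [this, hMset, Multiset.map_map]
  rfl

lemma aeval_prod_eq_zero_iff {n : ℕ} (t : Fin n → ℝ) (w : ℂ) :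
    Polynomial.aeval w (∏ i, (Polynomial.X - Polynomial.C (t i))) = 0 ↔ ∃ i, w = (t i : ℂ) := by
  rw [map_prod]
  rw [Finset.prod_eq_zero_iff]
  constructor
  · rintro ⟨i, _, hi⟩
    refine ⟨i, ?_⟩
    rw [map_sub, Polynomial.aeval_X, Polynomial.aeval_C] at hi
    have h2 : w - (t i : ℂ) = 0 := by simpa using hi
    linear_combination h2
  · rintro ⟨i, rfl⟩
    refine ⟨i, Finset.mem_univ i, ?_⟩
    rw [map_sub, Polynomial.aeval_X, Polynomial.aeval_C]
    simp
lemma chain_le {s : ℕ → ℝ} {m : ℕ} (h : ∀ i, i < m → s i < s (i+1)) :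
    ∀ i j, i ≤ j → j ≤ m → s i ≤ s j := by
  intro i j hij hjm
  induction j with
  | zero => simp_all
  | succ k ih =>
    rcases Nat.lt_or_ge i (k+1) with hik | hik
    · have h1 : s i ≤ s k := ih (by omega) (by omega)
      have h2 : s k < s (k+1) := h k (by omega)
      linarith
    · have : i = k + 1 := by omega
      subst this
      rfl

lemma sign_flip {a b : ℝ} {k : ℕ} (h1 : 0 < (-1:ℝ)^(k+1) * a) (h2 : 0 < (-1:ℝ)^k * b) :
    a * b < 0 := by
  have hsq : (-1:ℝ)^k * (-1:ℝ)^k = 1 := by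
    rw [← pow_add]
    exact Even.neg_one_pow ⟨k, by omega⟩
  have key : ((-1:ℝ)^(k+1)*a)*((-1:ℝ)^k*b) = -(a*b) := by
    rw [pow_succ]
    linear_combination (-(a*b)) * hsq
  nlinarith [mul_pos h1 h2]

lemma exists_roots_between {m : ℕ} (p : Polynomial ℝ) (hm : p.Monic) (hd : p.natDegree = m)
    (s : ℕ → ℝ) (hs : ∀ i, i < m → s i < s (i+1))
    (hsign : ∀ i, i ≤ m → 0 < (-1:ℝ)^(m-i) * p.eval (s i)) :
    ∃ t : ℕ → ℝ, (∀ i, i < m → s i < t i ∧ t i < s (i+1)) ∧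
      p = ∏ i ∈ Finset.range m, (Polynomial.X - Polynomial.C (t i)) := by
  classical
  have hex : ∀ i, i < m → ∃ c, s i < c ∧ c < s (i+1) ∧ p.eval c = 0 := by
    intro i hi
    have h1 : 0 < (-1:ℝ)^(m-i) * p.eval (s i) := hsign i (by omega)
    have h2 : 0 < (-1:ℝ)^(m-(i+1)) * p.eval (s (i+1)) := hsign (i+1) (by omega)
    have hk : m - i = (m - (i+1)) + 1 := by omega
    rw [hk] at h1
    exact poly_root_Ioo p (hs i hi) (sign_flip h1 h2)
  choose c hc1 hc2 hc3 using hex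
  set t : ℕ → ℝ := fun i => if h : i < m then c i h else 0 with htdef
  have hbounds : ∀ i, i < m → s i < t i ∧ t i < s (i+1) := by
    intro i hi
    simp only [htdef, dif_pos hi]
    exact ⟨hc1 i hi, hc2 i hi⟩
  refine ⟨t, hbounds, ?_⟩
  have hmono : ∀ i j, i < j → j < m → t i < t j := by
    intro i j hij hjm
    have h1 : t i < s (i+1) := (hbounds i (by omega)).2
    have h2 : s j < t j := (hbounds j hjm).1
    have h3 : s (i+1) ≤ s j := chain_le hs (i+1) j (by omega) (by omega)
    linarith
  have hfact := monic_factor_roots hm hd (fun i : Fin m => t i)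
    (fun i j hij => by
      rcases Nat.lt_trichotomy (i:ℕ) (j:ℕ) with h | h | h
      · exact absurd hij (ne_of_lt (hmono i j h j.isLt))
      · exact Fin.ext h
      · exact absurd hij.symm (ne_of_lt (hmono j i h i.isLt)))
    (fun i => by
      have hi := i.isLt
      simp only [htdef, dif_pos hi]
      exact hc3 i hi)
  rw [hfact, ← Finset.prod_range fun i => Polynomial.X - Polynomial.C (t i)]

lemma exists_roots_surrounding {m : ℕ} (p : Polynomial ℝ) (hm : p.Monic)
    (hd : p.natDegree = m+2)
    (s : ℕ → ℝ) (hs : ∀ i, i < m → s i < s (i+1))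
    (hsign : ∀ i, i ≤ m → 0 < (-1:ℝ)^(m+1-i) * p.eval (s i)) :
    ∃ t : ℕ → ℝ, (∀ i, i ≤ m → t i < s i ∧ s i < t (i+1)) ∧
      p = ∏ i ∈ Finset.range (m+2), (Polynomial.X - Polynomial.C (t i)) := by
  classical
  have hdegpos : 0 < p.degree := by
    rw [Polynomial.degree_eq_natDegree hm.ne_zero, hd]
    exact_mod_cast Nat.succ_pos _
  have hex : ∀ i, i < m → ∃ c, s i < c ∧ c < s (i+1) ∧ p.eval c = 0 := by
    intro i hi
    have h1 : 0 < (-1:ℝ)^(m+1-i) * p.eval (s i) := hsign i (by omega)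
    have h2 : 0 < (-1:ℝ)^(m+1-(i+1)) * p.eval (s (i+1)) := hsign (i+1) (by omega)
    have hk : m + 1 - i = (m + 1 - (i+1)) + 1 := by omega
    rw [hk] at h1
    exact poly_root_Ioo p (hs i hi) (sign_flip h1 h2)
  choose c hc1 hc2 hc3 using hex
  have htopsign : p.eval (s m) < 0 := by
    have h0 := hsign m (le_refl m)
    have hone : m + 1 - m = 1 := by omega
    rw [hone] at h0
    nlinarith [h0]
  obtain ⟨ctop, hctop1, hctop2⟩ := poly_root_gt p hm hdegpos htopsign
  have hbotsign : (-1:ℝ)^(p.natDegree) * p.eval (s 0) < 0 := by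
    have h0 := hsign 0 (by omega)
    have hone : m + 1 - 0 = m + 1 := by omega
    rw [hone] at h0
    rw [hd]
    have hkey : (-1:ℝ)^(m+2) * p.eval (s 0) = -((-1:ℝ)^(m+1) * p.eval (s 0)) := by
      rw [pow_succ]
      ring
    rw [hkey]
    linarith
  obtain ⟨cbot, hcbot1, hcbot2⟩ := poly_root_lt p hm hdegpos hbotsign
  set t : ℕ → ℝ := fun i =>
    if i = 0 then cbot else if h : i - 1 < m then c (i-1) h else ctop with htdef
  have ht0 : t 0 = cbot := by simp [htdef]
  have httop : t (m+1) = ctop := by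
    simp [htdef, Nat.add_sub_cancel, lt_self_iff_false]
  have htin : ∀ i (hi : i < m), t (i+1) = c i hi := by
    intro i hi
    simp [htdef, Nat.add_sub_cancel, hi]
  have hbounds : ∀ i, i ≤ m → t i < s i ∧ s i < t (i+1) := by
    intro i hi
    constructor
    · rcases Nat.eq_zero_or_pos i with h0 | h0
      · subst h0; rw [ht0]; exact hcbot1
      · have hi1 : i - 1 < m := by omega
        have heq : t i = c (i-1) hi1 := by
          have := htin (i-1) hi1
          rw [show i - 1 + 1 = i from by omega] at this
          exact this
        rw [heq]
        have := hc2 (i-1) hi1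
        rw [show i - 1 + 1 = i from by omega] at this
        exact this
    · rcases Nat.lt_or_ge i m with him | him
      · rw [htin i him]
        exact hc1 i him
      · have : i = m := by omega
        subst this
        rw [httop]
        exact hctop1
  refine ⟨t, hbounds, ?_⟩
  have heval : ∀ i, i < m + 2 → p.eval (t i) = 0 := by
    intro i hi
    rcases Nat.eq_zero_or_pos i with h0 | h0
    · subst h0; rw [ht0]; exact hcbot2
    rcases Nat.lt_or_ge (i-1) m with him | him
    · have heq := htin (i-1) him
      rw [show i - 1 + 1 = i from by omega] at heq
      rw [heq]
      exact hc3 (i-1) him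
    · have : i = m + 1 := by omega
      subst this
      rw [httop]
      exact hctop2
  have hmono : ∀ i j, i < j → j < m + 2 → t i < t j := by
    intro i j hij hjm
    have h1 : t i < s i := (hbounds i (by omega)).1
    have h2 : s (j-1) < t j := by
      have := (hbounds (j-1) (by omega)).2
      rw [show j - 1 + 1 = j from by omega] at this
      exact this
    have h3 : s i ≤ s (j-1) := chain_le hs i (j-1) (by omega) (by omega)
    linarith
  have hfact := monic_factor_roots hm hd (fun i : Fin (m+2) => t i)
    (fun i j hij => by
      rcases Nat.lt_trichotomy (i:ℕ) (j:ℕ) with h | h | h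
      · exact absurd hij (ne_of_lt (hmono i j h j.isLt))
      · exact Fin.ext h
      · exact absurd hij.symm (ne_of_lt (hmono j i h i.isLt)))
    (fun i => heval i i.isLt)
  rw [hfact, ← Finset.prod_range fun i => Polynomial.X - Polynomial.C (t i)]
theorem interlace_pp (lam : ℝ) (hlam : 0 < lam) :
    ∀ n : ℕ, ∃ r s : ℕ → ℝ,
      (∀ i, i < n → s i < s (i+1)) ∧
      pp lam n = ∏ i ∈ Finset.range n, (Polynomial.X - Polynomial.C (r i)) ∧
      pp lam (n+1) = ∏ i ∈ Finset.range (n+1), (Polynomial.X - Polynomial.C (s i)) ∧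
      (∀ i, i < n → s i < r i ∧ r i < s (i+1)) := by
  intro n
  induction n with
  | zero =>
    refine ⟨fun _ => 0, fun _ => 0, by omega, by simp [pp], ?_, by omega⟩
    simp [pp]
  | succ n ih =>
    obtain ⟨r, s, hschain, hfr, hfs, hint⟩ := ih
    have hc : (0:ℝ) < ((n:ℝ)+1)*((n:ℝ)+2*lam)/4 := by positivity
    have hm2 := pp_monic_natDegree lam (n+2)
    -- eval of pp (n+1) at s i is zero
    have hz : ∀ i, i ≤ n → (pp lam (n+1)).eval (s i) = 0 := by
      intro i hi
      rw [hfs, Polynomial.eval_prod]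
      apply Finset.prod_eq_zero (Finset.mem_range.2 (by omega : i < n+1))
      simp
    -- sign of eval of pp n at s i
    have hpos : ∀ i, i ≤ n → 0 < (-1:ℝ)^(n-i) * (pp lam n).eval (s i) := by
      intro i hi
      have he : (pp lam n).eval (s i) = ∏ j : Fin n, (s i - r j) := by
        rw [hfr, Polynomial.eval_prod, ← Finset.prod_range fun j => s i - r j]
        apply Finset.prod_congr rfl
        intro j _
        simp
      rw [he]
      apply sign_prod_aux (fun j : Fin n => r j) (s i) i hi
      · intro j hj
        have h1 : r j < s ((j:ℕ)+1) := (hint j (j.isLt)).2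
        have h2 : s ((j:ℕ)+1) ≤ s i := chain_le hschain ((j:ℕ)+1) i (by omega) (by omega)
        linarith
      · intro j hj
        have h1 : s (j:ℕ) < r j := (hint j (j.isLt)).1
        have h2 : s i ≤ s (j:ℕ) := chain_le hschain i (j:ℕ) (by omega) (by omega)
        linarith
    -- sign of eval of pp (n+2) at s i
    have hsign : ∀ i, i ≤ n → 0 < (-1:ℝ)^(n+1-i) * (pp lam (n+2)).eval (s i) := by
      intro i hi
      have hpp2 : pp lam (n+2) = Polynomial.X * pp lam (n+1)
          - Polynomial.C (((n:ℝ)+1)*((n:ℝ)+2*lam)/4) * pp lam n := rfl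
      rw [hpp2, Polynomial.eval_sub, Polynomial.eval_mul, Polynomial.eval_X,
        Polynomial.eval_mul, Polynomial.eval_C, hz i hi, mul_zero, zero_sub]
      rw [show n+1-i = (n-i)+1 from by omega, pow_succ]
      have h2 := mul_pos hc (hpos i hi)
      nlinarith [h2]
    obtain ⟨tt, htb, htf⟩ := exists_roots_surrounding (pp lam (n+2)) hm2.1 hm2.2 s hschain hsign
    refine ⟨s, tt, ?_, hfs, htf, fun i hi => (htb i (by omega))⟩
    intro i hi
    have h1 := (htb i (by omega)).1
    have h2 := (htb i (by omega)).2
    linarith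
lemma aeval_ofReal (p : Polynomial ℝ) (z : ℝ) :
    Polynomial.aeval (z:ℂ) p = ((p.eval z : ℝ) : ℂ) := by
  have := Polynomial.aeval_algebraMap_apply ℂ z p
  simpa using this

lemma mixed_real (lam : ℝ) (hlam : 0 < lam) (n : ℕ) (z : ℝ) :
    (2*lam+(n:ℝ)) * (2*lam+(n:ℝ)+1) * (pp lam n).eval z
      = 2*(2*lam^2+((n:ℝ)+1)*lam+2*z^2) * (pp (lam+1) n).eval z
        - 4*z*(pp (lam+1) (n+1)).eval z := by
  have h := mixed_MP lam hlam n (z:ℂ)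
  rw [aeval_pp lam hlam n, aeval_pp (lam+1) (by linarith) n,
    aeval_pp (lam+1) (by linarith) (n+1), aeval_ofReal, aeval_ofReal, aeval_ofReal] at h
  exact_mod_cast h

theorem stmt14 (n : ℕ) (lam : ℝ) (hlam : 0 < lam)
    (hcop : ∀ w : ℂ, ¬(MP n lam (Real.pi / 2) w = 0 ∧ MP (n + 1) (lam + 1) (Real.pi / 2) w = 0)) :
    ∃ y : Fin n → ℝ, ∃ z : Fin (n + 1) → ℝ,
      StrictMono y ∧ StrictMono z ∧
      (∀ w : ℂ, MP n lam (Real.pi / 2) w = 0 ↔ ∃ i, w = (y i : ℂ)) ∧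
      (∀ w : ℂ, MP (n + 1) (lam + 1) (Real.pi / 2) w = 0 ↔ ∃ i, w = (z i : ℂ)) ∧
      ∀ i : Fin n, z i.castSucc < y i ∧ y i < z i.succ := by
  have hlam1 : (0:ℝ) < lam + 1 := by linarith
  obtain ⟨r, s, hschain, hfr, hfs, hint⟩ := interlace_pp (lam+1) hlam1 n
  -- sign of eval of pp (lam+1) n at s i
  have hpos : ∀ i, i ≤ n → 0 < (-1:ℝ)^(n-i) * (pp (lam+1) n).eval (s i) := by
    intro i hi
    have he : (pp (lam+1) n).eval (s i) = ∏ j : Fin n, (s i - r j) := by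
      rw [hfr, Polynomial.eval_prod, ← Finset.prod_range fun j => s i - r j]
      apply Finset.prod_congr rfl
      intro j _
      simp
    rw [he]
    apply sign_prod_aux (fun j : Fin n => r j) (s i) i hi
    · intro j hj
      have h1 : r j < s ((j:ℕ)+1) := (hint j (j.isLt)).2
      have h2 : s ((j:ℕ)+1) ≤ s i := chain_le hschain ((j:ℕ)+1) i (by omega) (by omega)
      linarith
    · intro j hj
      have h1 : s (j:ℕ) < r j := (hint j (j.isLt)).1
      have h2 : s i ≤ s (j:ℕ) := chain_le hschain i (j:ℕ) (by omega) (by omega)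
      linarith
  -- eval of pp (lam+1) (n+1) at s i is zero
  have hz0 : ∀ i, i ≤ n → (pp (lam+1) (n+1)).eval (s i) = 0 := by
    intro i hi
    rw [hfs, Polynomial.eval_prod]
    apply Finset.prod_eq_zero (Finset.mem_range.2 (by omega : i < n+1))
    simp
  -- sign of eval of pp lam n at s i
  have hsign : ∀ i, i ≤ n → 0 < (-1:ℝ)^(n-i) * (pp lam n).eval (s i) := by
    intro i hi
    have heq := mixed_real lam hlam n (s i)
    rw [hz0 i hi, mul_zero, sub_zero] at heq
    have hA : (0:ℝ) < 2*(2*lam^2+((n:ℝ)+1)*lam+2*(s i)^2) := by positivity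
    have hd : (0:ℝ) < (2*lam+(n:ℝ)) * (2*lam+(n:ℝ)+1) := by positivity
    have hP := mul_pos hA (hpos i hi)
    have heqk : (2*lam+(n:ℝ)) * (2*lam+(n:ℝ)+1) * ((-1:ℝ)^(n-i) * (pp lam n).eval (s i))
        = 2*(2*lam^2+((n:ℝ)+1)*lam+2*(s i)^2) * ((-1:ℝ)^(n-i) * (pp (lam+1) n).eval (s i)) := by
      linear_combination ((-1:ℝ)^(n-i)) * heq
    nlinarith [hP, hd, heqk]
  have hmn := pp_monic_natDegree lam n
  obtain ⟨t, htb, htf⟩ := exists_roots_between (pp lam n) hmn.1 hmn.2 s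
    (fun i hi => hschain i (by omega)) hsign
  refine ⟨fun i => t i, fun i => s i, ?_, ?_, ?_, ?_, ?_⟩
  · intro i j hij
    have hij' : (i:ℕ) < (j:ℕ) := hij
    have h1 : t (i:ℕ) < s ((i:ℕ)+1) := (htb i i.isLt).2
    have h2 : s ((i:ℕ)+1) ≤ s (j:ℕ) := chain_le hschain ((i:ℕ)+1) (j:ℕ) (by omega) (by omega)
    have h3 : s (j:ℕ) < t (j:ℕ) := (htb j j.isLt).1
    linarith
  · intro i j hij
    have hij' : (i:ℕ) < (j:ℕ) := hij
    have h1 : s (i:ℕ) < s ((i:ℕ)+1) := hschain i (by omega)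
    have h2 : s ((i:ℕ)+1) ≤ s (j:ℕ) := chain_le hschain ((i:ℕ)+1) (j:ℕ) (by omega) (by omega)
    linarith
  · intro w
    rw [aeval_pp lam hlam n w, htf, Finset.prod_range fun i => Polynomial.X - Polynomial.C (t i)]
    exact aeval_prod_eq_zero_iff (fun i : Fin n => t i) w
  · intro w
    rw [aeval_pp (lam+1) hlam1 (n+1) w, hfs,
      Finset.prod_range fun i => Polynomial.X - Polynomial.C (s i)]
    exact aeval_prod_eq_zero_iff (fun i : Fin (n+1) => s i) w
  · intro i
    have hb := htb i i.isLt
    constructor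
    · simpa using hb.1
    · simpa using hb.2
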